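/- Let p_1, …, p_m be nonzero polynomials with complex coefficients, let p = ∏_{k=1}^m p_k, and let n = deg p. If m ≤ n, then ∏_{k=1}^m ‖p_k‖_D ≤ 2^{n−1} ‖p‖_D, where D = {z ∈ ℂ : |z| ≤ 1} is the closed unit disk. -/

import Mathlib

/-!
Factor each polynomial over its roots. On the disk, the triangle inequality gives
`‖p_k‖ ≤ |c_k| ∏ (1 + |r|)` over the roots `r` of `p_k`, and these bounds multiply to
`|c| ∏ᵢ (1 + |rᵢ|)` for `p = c ∏ᵢ (X - rᵢ)`. With `aᵢ = max 1 |rᵢ| ≥ bᵢ = min 1 |rᵢ|`, Chebyshev's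
inequality applied inductively gives `∏ (aᵢ + bᵢ) ≤ 2^(n-1) (∏ aᵢ + ∏ bᵢ)`. Reflecting the roots
inside the disk in the unit circle yields `q` of degree `≤ n` with `|q| = |p|` on the circle,
`|q(0)| = |c| ∏ aᵢ` and `|[zⁿ] q| = |c| ∏ bᵢ`. Visser's inequality `|q(0)| + |[zⁿ] q| ≤ ‖q‖`,
proved by averaging `q` over a suitably rotated set of `n`-th roots of unity, concludes.
-/

open Polynomial Set Metric

/-- The sup norm of a polynomial on a set `E ⊆ ℂ`. -/
noncomputable def polyNorm (E : Set ℂ) (p : Polynomial ℂ) : ℝ :=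
  ⨆ z : E, ‖p.eval (z : ℂ)‖

open Finset ComplexConjugate

namespace KrooPritsker

section polyNorm

variable {E : Set ℂ}

lemma bddAbove_range_norm_eval (hE : IsCompact E) (p : ℂ[X]) :
    BddAbove (Set.range fun z : E => ‖p.eval (z : ℂ)‖) := by
  simpa only [Set.image_eq_range] using
    hE.bddAbove_image (f := fun z => ‖p.eval z‖) p.continuous.norm.continuousOn

lemma norm_eval_le_polyNorm (hE : IsCompact E) (p : ℂ[X]) {z : ℂ} (hz : z ∈ E) :
    ‖p.eval z‖ ≤ polyNorm E p :=
  le_ciSup (bddAbove_range_norm_eval hE p) ⟨z, hz⟩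

lemma polyNorm_le (hE : E.Nonempty) (p : ℂ[X]) {M : ℝ} (hM : ∀ z ∈ E, ‖p.eval z‖ ≤ M) :
    polyNorm E p ≤ M :=
  have := hE.to_subtype
  ciSup_le fun z => hM z z.2

lemma polyNorm_nonneg (E : Set ℂ) (p : ℂ[X]) : 0 ≤ polyNorm E p :=
  Real.iSup_nonneg fun _ => norm_nonneg _

end polyNorm

lemma two_mul_prod_add_le {α : Type*} (s : Multiset α) (f g : α → ℝ)
    (hg : ∀ a ∈ s, 0 ≤ g a) (hgf : ∀ a ∈ s, g a ≤ f a) :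
    2 * (s.map fun a => f a + g a).prod ≤ 2 ^ s.card * ((s.map f).prod + (s.map g).prod) := by
  induction s using Multiset.induction_on with
  | empty => norm_num
  | cons a s ih =>
    simp only [Multiset.mem_cons, forall_eq_or_imp] at hg hgf
    have hB : 0 ≤ (s.map g).prod := Multiset.prod_map_nonneg hg.2
    have hBA : (s.map g).prod ≤ (s.map f).prod := Multiset.prod_map_le_prod_map₀ g f hg.2 hgf.2
    have chebyshev : (f a + g a) * ((s.map f).prod + (s.map g).prod) ≤
        2 * (f a * (s.map f).prod + g a * (s.map g).prod) := by
      nlinarith [mul_nonneg (sub_nonneg.2 hgf.1) (sub_nonneg.2 hBA)]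
    simp only [Multiset.map_cons, Multiset.prod_cons, Multiset.card_cons, pow_succ]
    calc 2 * ((f a + g a) * (s.map fun a => f a + g a).prod)
        = (f a + g a) * (2 * (s.map fun a => f a + g a).prod) := by ring
      _ ≤ (f a + g a) * (2 ^ s.card * ((s.map f).prod + (s.map g).prod)) :=
          mul_le_mul_of_nonneg_left (ih hg.2 hgf.2) (by linarith)
      _ ≤ 2 ^ s.card * 2 * (f a * (s.map f).prod + g a * (s.map g).prod) := by
          nlinarith [pow_pos (two_pos (α := ℝ)) s.card]

lemma norm_multiset_prod (s : Multiset ℂ) : ‖s.prod‖ = (s.map (‖·‖)).prod :=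
  map_multiset_prod normHom s

lemma norm_add_mul_exp_arg_sub_arg (a b : ℂ) :
    ‖a + b * Complex.exp ((a.arg - b.arg : ℝ) * Complex.I)‖ = ‖a‖ + ‖b‖ := by
  have hb : b * Complex.exp ((a.arg - b.arg : ℝ) * Complex.I) =
      ‖b‖ * Complex.exp (a.arg * Complex.I) := by
    nth_rw 1 [← Complex.norm_mul_exp_arg_mul_I b]
    rw [mul_assoc, ← Complex.exp_add]
    push_cast
    ring_nf
  have : a + b * Complex.exp ((a.arg - b.arg : ℝ) * Complex.I) =
      (‖a‖ + ‖b‖ : ℝ) * Complex.exp (a.arg * Complex.I) := by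
    nth_rw 1 [← Complex.norm_mul_exp_arg_mul_I a]
    rw [hb]
    push_cast
    ring
  rw [this, norm_mul, Complex.norm_exp_ofReal_mul_I, mul_one, Complex.norm_real,
    Real.norm_of_nonneg (by positivity)]

lemma sum_range_pow_pow_eq_zero {K : Type*} [Field K] {ζ : K} {n k : ℕ}
    (hζ : IsPrimitiveRoot ζ n) (hk0 : k ≠ 0) (hkn : k < n) :
    ∑ j ∈ range n, (ζ ^ k) ^ j = 0 := by
  rw [geom_sum_eq (hζ.pow_ne_one_of_pos_of_lt hk0 hkn), ← pow_mul, mul_comm, pow_mul,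
    hζ.pow_eq_one, one_pow, sub_self, zero_div]

lemma sum_eval_pow_mul {K : Type*} [Field K] {ζ : K} {n : ℕ} (hζ : IsPrimitiveRoot ζ n)
    (hn : n ≠ 0) {q : K[X]} (hq : q.natDegree ≤ n) (z : K) :
    ∑ j ∈ range n, q.eval (ζ ^ j * z) = n * (q.coeff 0 + q.coeff n * z ^ n) := by
  calc ∑ j ∈ range n, q.eval (ζ ^ j * z)
      = ∑ k ∈ range (n + 1), q.coeff k * z ^ k * ∑ j ∈ range n, (ζ ^ k) ^ j := by
        simp_rw [eval_eq_sum_range' (Nat.lt_succ_of_le hq), Finset.mul_sum]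
        rw [Finset.sum_comm]
        exact sum_congr rfl fun k _ => sum_congr rfl fun j _ => by ring
    _ = n * (q.coeff 0 + q.coeff n * z ^ n) := by
        rw [sum_range_succ, sum_eq_single_of_mem 0 (mem_range.2 (Nat.pos_of_ne_zero hn))]
        · simp only [pow_zero, mul_one, one_pow, sum_const, card_range, nsmul_eq_mul,
            hζ.pow_eq_one]
          ring
        · intro k hk hk0
          rw [sum_range_pow_pow_eq_zero hζ hk0 (mem_range.1 hk), mul_zero]

lemma norm_coeff_zero_add_norm_coeff_le {q : ℂ[X]} {n : ℕ} (hn : n ≠ 0) (hq : q.natDegree ≤ n)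
    {M : ℝ} (hM : ∀ w : ℂ, ‖w‖ = 1 → ‖q.eval w‖ ≤ M) :
    ‖q.coeff 0‖ + ‖q.coeff n‖ ≤ M := by
  set θ : ℝ := (q.coeff 0).arg - (q.coeff n).arg
  set z := Complex.exp ((θ / n : ℝ) * Complex.I)
  set ζ := Complex.exp (2 * Real.pi * Complex.I / n)
  have hζ : IsPrimitiveRoot ζ n := Complex.isPrimitiveRoot_exp n hn
  have hzn : z ^ n = Complex.exp (θ * Complex.I) := by
    rw [← Complex.exp_nat_mul]
    push_cast
    field_simp
  have hnorm (j : ℕ) : ‖ζ ^ j * z‖ = 1 := by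
    rw [norm_mul, norm_pow, hζ.norm'_eq_one hn, one_pow, one_mul, Complex.norm_exp_ofReal_mul_I]
  have : (n : ℝ) * (‖q.coeff 0‖ + ‖q.coeff n‖) ≤ n * M := calc
    (n : ℝ) * (‖q.coeff 0‖ + ‖q.coeff n‖) = ‖∑ j ∈ range n, q.eval (ζ ^ j * z)‖ := by
      rw [sum_eval_pow_mul hζ hn hq, norm_mul, hzn, norm_add_mul_exp_arg_sub_arg,
        Complex.norm_natCast]
    _ ≤ ∑ j ∈ range n, ‖q.eval (ζ ^ j * z)‖ := norm_sum_le _ _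
    _ ≤ ∑ j ∈ range n, M := sum_le_sum fun j _ => hM _ (hnorm j)
    _ = n * M := by simp
  exact le_of_mul_le_mul_left this (by positivity)

/-- For `r` inside the unit disk, `X - r` is replaced by a factor vanishing at the inversion
`1 / conj r` of `r` in the unit circle; on the circle both have modulus `‖w - r‖`. -/
noncomputable def reflectedFactor (r : ℂ) : ℂ[X] :=
  if 1 ≤ ‖r‖ then X - C r else C (conj r) * X - 1

lemma natDegree_reflectedFactor_le (r : ℂ) : (reflectedFactor r).natDegree ≤ 1 := by
  unfold reflectedFactor
  split
  · exact natDegree_X_sub_C_le r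
  · exact (natDegree_sub_le _ _).trans
      (max_le ((natDegree_C_mul_le _ _).trans natDegree_X_le) (natDegree_one.trans_le zero_le_one))

lemma norm_coeff_one_reflectedFactor (r : ℂ) :
    ‖(reflectedFactor r).coeff 1‖ = min 1 ‖r‖ := by
  unfold reflectedFactor
  split
  · next h => simp [h]
  · next h => simp [coeff_one, (not_le.1 h).le]

lemma norm_eval_zero_reflectedFactor (r : ℂ) :
    ‖(reflectedFactor r).eval 0‖ = max 1 ‖r‖ := by
  unfold reflectedFactor
  split
  · next h => simp [h]
  · next h => simp [(not_le.1 h).le]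

lemma norm_eval_reflectedFactor {w : ℂ} (hw : ‖w‖ = 1) (r : ℂ) :
    ‖(reflectedFactor r).eval w‖ = ‖w - r‖ := by
  unfold reflectedFactor
  split
  · simp
  · have hww : w * conj w = 1 := by
      rw [Complex.mul_conj, Complex.normSq_eq_norm_sq, hw]
      norm_num
    have : conj r * w - 1 = w * conj (r - w) := by
      rw [map_sub, mul_sub, hww]
      ring
    simp only [eval_sub, eval_mul, eval_C, eval_X, eval_one]
    rw [this, norm_mul, hw, Complex.norm_conj, one_mul, norm_sub_rev]

noncomputable def reflection (p : ℂ[X]) : ℂ[X] :=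
  C p.leadingCoeff * (p.roots.map reflectedFactor).prod

lemma natDegree_reflection_le (p : ℂ[X]) : (reflection p).natDegree ≤ p.roots.card := by
  have hdeg : ∀ f ∈ p.roots.map reflectedFactor, f.natDegree ≤ 1 :=
    Multiset.forall_mem_map_iff.2 fun r _ => natDegree_reflectedFactor_le r
  refine (natDegree_C_mul_le _ _).trans ((natDegree_multiset_prod_le _).trans ?_)
  simpa using Multiset.sum_le_card_nsmul _ 1 (Multiset.forall_mem_map_iff.2 hdeg)

lemma norm_coeff_zero_reflection (p : ℂ[X]) :
    ‖(reflection p).coeff 0‖ = ‖p.leadingCoeff‖ * (p.roots.map fun r => max 1 ‖r‖).prod := by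
  rw [coeff_zero_eq_eval_zero, reflection, eval_mul, eval_C, eval_multiset_prod, norm_mul,
    norm_multiset_prod, Multiset.map_map, Multiset.map_map]
  simp only [Function.comp_def, norm_eval_zero_reflectedFactor]

lemma norm_coeff_card_roots_reflection (p : ℂ[X]) :
    ‖(reflection p).coeff p.roots.card‖ =
      ‖p.leadingCoeff‖ * (p.roots.map fun r => min 1 ‖r‖).prod := by
  have := coeff_multiset_prod_of_natDegree_le (p.roots.map reflectedFactor) 1
    (Multiset.forall_mem_map_iff.2 fun r _ => natDegree_reflectedFactor_le r)
  rw [Multiset.card_map, mul_one] at this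
  rw [reflection, coeff_C_mul, this, norm_mul, norm_multiset_prod, Multiset.map_map,
    Multiset.map_map]
  simp only [Function.comp_def, norm_coeff_one_reflectedFactor]

lemma norm_eval_reflection (p : ℂ[X]) {w : ℂ} (hw : ‖w‖ = 1) :
    ‖(reflection p).eval w‖ = ‖p.eval w‖ := by
  rw [reflection, (IsAlgClosed.splits p).eval_eq_prod_roots, eval_mul, eval_C, eval_multiset_prod,
    norm_mul, norm_mul, norm_multiset_prod, norm_multiset_prod, Multiset.map_map, Multiset.map_map,
    Multiset.map_map]
  simp only [Function.comp_def, norm_eval_reflectedFactor hw]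

noncomputable def rootBound (p : ℂ[X]) : ℝ :=
  ‖p.leadingCoeff‖ * (p.roots.map fun r => 1 + ‖r‖).prod

lemma polyNorm_closedBall_le_rootBound (p : ℂ[X]) :
    polyNorm (closedBall 0 1) p ≤ rootBound p := by
  refine polyNorm_le ⟨0, by simp⟩ p fun z hz => ?_
  rw [(IsAlgClosed.splits p).eval_eq_prod_roots, norm_mul, norm_multiset_prod, Multiset.map_map,
    rootBound]
  refine mul_le_mul_of_nonneg_left (Multiset.prod_map_le_prod_map₀ _ _
    (fun _ _ => norm_nonneg _) fun r _ => ?_) (norm_nonneg _)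
  calc ‖z - r‖ ≤ ‖z‖ + ‖r‖ := norm_sub_le z r
    _ ≤ 1 + ‖r‖ := by gcongr; simpa using hz

lemma rootBound_prod {ι : Type*} (s : Finset ι) (f : ι → ℂ[X]) :
    rootBound (∏ i ∈ s, f i) = ∏ i ∈ s, rootBound (f i) := by
  by_cases h : ∏ i ∈ s, f i = 0
  · obtain ⟨i, hi, hfi⟩ := Finset.prod_eq_zero_iff.1 h
    rw [h, Finset.prod_eq_zero hi (by simp [rootBound, hfi])]
    simp [rootBound]
  · rw [rootBound, leadingCoeff_prod, roots_prod f s h, Multiset.map_bind, Multiset.prod_bind,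
      norm_prod, ← Finset.prod_eq_multiset_prod, ← Finset.prod_mul_distrib]
    rfl

lemma rootBound_le (p : ℂ[X]) :
    rootBound p ≤ 2 ^ (p.natDegree - 1) * polyNorm (closedBall 0 1) p := by
  have hD : IsCompact (closedBall (0 : ℂ) 1) := isCompact_closedBall 0 1
  obtain hn | hn := eq_or_ne p.natDegree 0
  · rw [hn, eq_C_of_natDegree_eq_zero hn]
    simpa [rootBound] using norm_eval_le_polyNorm hD (C (p.coeff 0)) (z := 0) (by simp)
  have hcard : p.roots.card = p.natDegree := (IsAlgClosed.splits p).natDegree_eq_card_roots.symm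
  obtain ⟨k, hk⟩ := Nat.exists_eq_succ_of_ne_zero (hcard ▸ hn)
  have key := two_mul_prod_add_le p.roots (fun r => max 1 ‖r‖) (fun r => min 1 ‖r‖)
    (fun r _ => le_min zero_le_one (norm_nonneg r)) (fun r _ => min_le_max)
  simp only [max_add_min, hk, pow_succ] at key
  have visser := norm_coeff_zero_add_norm_coeff_le (hcard ▸ hn) (natDegree_reflection_le p)
    (M := polyNorm (closedBall 0 1) p) fun w hw => by
      rw [norm_eval_reflection p hw]
      exact norm_eval_le_polyNorm hD p (by simp [hw])
  rw [norm_coeff_zero_reflection, norm_coeff_card_roots_reflection] at visser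
  rw [← hcard, hk, Nat.succ_sub_one]
  calc rootBound p = ‖p.leadingCoeff‖ * (p.roots.map fun r => 1 + ‖r‖).prod := rfl
    _ ≤ ‖p.leadingCoeff‖ * (2 ^ k * ((p.roots.map fun r => max 1 ‖r‖).prod +
          (p.roots.map fun r => min 1 ‖r‖).prod)) := by gcongr; linarith
    _ = 2 ^ k * (‖p.leadingCoeff‖ * (p.roots.map fun r => max 1 ‖r‖).prod +
          ‖p.leadingCoeff‖ * (p.roots.map fun r => min 1 ‖r‖).prod) := by ring
    _ ≤ 2 ^ k * polyNorm (closedBall 0 1) p := by gcongr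

end KrooPritsker

open KrooPritsker

theorem kroo_pritsker_inequality_general (m : ℕ) (p : Fin m → Polynomial ℂ) :
    ∏ k, polyNorm (closedBall (0:ℂ) 1) (p k) ≤
      2 ^ ((∏ k, p k).natDegree - 1) * polyNorm (closedBall (0:ℂ) 1) (∏ k, p k) :=
  calc ∏ k, polyNorm (closedBall (0:ℂ) 1) (p k)
      ≤ ∏ k, rootBound (p k) :=
        Finset.prod_le_prod (fun _ _ => polyNorm_nonneg _ _)
          fun k _ => polyNorm_closedBall_le_rootBound (p k)
    _ = rootBound (∏ k, p k) := (rootBound_prod _ p).symm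
    _ ≤ _ := rootBound_le _

theorem kroo_pritsker_inequality (m : ℕ) (p : Fin m → Polynomial ℂ)
    (hp : ∀ k, p k ≠ 0) (hm : m ≤ (∏ k, p k).natDegree) :
    ∏ k, polyNorm (closedBall (0:ℂ) 1) (p k) ≤
      2 ^ ((∏ k, p k).natDegree - 1) * polyNorm (closedBall (0:ℂ) 1) (∏ k, p k) :=
  kroo_pritsker_inequality_general m p
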